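/- For the cycle C_5, QEC(C_5) = -2/(3 + √5) = -1/(4 cos²(π/5)). -/
import Mathlib


/-- Cyclic distance on the cycle C_m with vertices identified with Fin m. -/
def cycDist (m : ℕ) (i j : Fin m) : ℕ :=
  min ((i.val + m - j.val) % m) ((j.val + m - i.val) % m)

lemma cycDist_quadForm (f : Fin 5 → ℝ) :
    ∑ i, ∑ j, (cycDist 5 i j : ℝ) * f i * f j =
    2*(f 0*f 1 + f 1*f 2 + f 2*f 3 + f 3*f 4 + f 4*f 0)
    + 4*(f 0*f 2 + f 1*f 3 + f 2*f 4 + f 3*f 0 + f 4*f 1) := by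
  simp only [Fin.sum_univ_five]
  norm_num [cycDist, show ((3:Fin 5):ℕ) = 3 from rfl, show ((4:Fin 5):ℕ) = 4 from rfl]
  ring

/-- QEC(C_5) = -2/(3 + √5) = -1/(4 cos²(π/5)). -/
theorem qec_cycle_five :
    IsGreatest {x : ℝ | ∃ f : Fin 5 → ℝ,
      (∑ i, f i ^ 2) = 1 ∧ (∑ i, f i) = 0 ∧
      x = ∑ i, ∑ j, (cycDist 5 i j : ℝ) * f i * f j} (-2/(3 + Real.sqrt 5))
    ∧ -2/(3 + Real.sqrt 5) = -1/(4 * Real.cos (Real.pi/5) ^ 2) := by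
  have hs0 : (0:ℝ) ≤ 5 := by norm_num
  set s : ℝ := Real.sqrt 5 with hs_def
  have hs : s ^ 2 = 5 := Real.sq_sqrt hs0
  have hs1 : (1:ℝ) ≤ s := by
    nlinarith [Real.sqrt_nonneg (5:ℝ), hs]
  have h3s : (0:ℝ) < 3 + s := by linarith
  have hval : -2/(3 + s) = (s - 3)/2 := by
    rw [div_eq_div_iff h3s.ne' (by norm_num)]
    nlinarith [hs]
  constructor
  · constructor
    · -- membership
      set r : ℝ := Real.sqrt (2/5) with hr_def
      have hr : r ^ 2 = 2/5 := Real.sq_sqrt (by norm_num)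
      refine ⟨![r, -r*(1+s)/4, r*(s-1)/4, r*(s-1)/4, -r*(1+s)/4], ?_, ?_, ?_⟩
      · simp only [Fin.sum_univ_five, Matrix.cons_val_zero, Matrix.cons_val_one,
          Matrix.head_cons, Matrix.cons_val_two, Matrix.tail_cons, Matrix.cons_val_three,
          Matrix.cons_val_four]
        linear_combination (1/10)*hs + ((5 + s^2)/4)*hr
      · simp only [Fin.sum_univ_five, Matrix.cons_val_zero, Matrix.cons_val_one,
          Matrix.head_cons, Matrix.cons_val_two, Matrix.tail_cons, Matrix.cons_val_three,
          Matrix.cons_val_four]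
        ring
      · rw [hval, cycDist_quadForm]
        simp only [Matrix.cons_val_zero, Matrix.cons_val_one,
          Matrix.head_cons, Matrix.cons_val_two, Matrix.tail_cons, Matrix.cons_val_three,
          Matrix.cons_val_four]
        linear_combination (15/8 - 5/4*s + 3/8*s^2)*hr + (3/20)*hs
    · -- upper bound
      rintro x ⟨f, h1, h0, hx⟩
      rw [hval]
      rw [cycDist_quadForm] at hx
      simp only [Fin.sum_univ_five] at h1 h0
      set f0 := f 0; set f1 := f 1; set f2 := f 2; set f3 := f 3; set f4 := f 4
      have key : (s-3)/2 - x =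
          ((1+s)/2) * (f0 + ((s-1)/2)*(f1 + f4))^2
          + (f1 + f2 - ((s-1)/2)*f4)^2
          + ((s-1)/2) * (f2 + ((1+s)/2)*f3 + f4)^2 := by
        rw [hx]
        linear_combination (2 - (1+s)/2) * h1 + (-2*(f0+f1+f2+f3+f4)) * h0 +
          (-s/8*f1^2 - s/4*f1*f4 - s/8*f4^2 - s/8*f3^2 - 1/2*f0*f1 - 1/2*f0*f4
            + 1/8*f1^2 + 1/4*f1*f4 - 1/8*f4^2 - 1/2*f2*f3 - 1/2*f3*f4 - 1/8*f3^2) * hs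
      nlinarith [sq_nonneg (f0 + ((s-1)/2)*(f1 + f4)), sq_nonneg (f1 + f2 - ((s-1)/2)*f4),
        sq_nonneg (f2 + ((1+s)/2)*f3 + f4), key, hs1]
  · rw [Real.cos_pi_div_five]
    rw [div_eq_div_iff h3s.ne' (by nlinarith)]
    nlinarith [hs]
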